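/- Let H be a real Hilbert space, and for k = 1,…,m let X_k, Z_k be bounded self-adjoint operators on H, Ξ₂ a bounded operator on H, L_k bounded self-adjoint operators, W_k positive semi-definite bounded self-adjoint operators with W := Σ_k W_k satisfying ⟨z, Wz⟩ ≥ δ‖z‖² for some δ > 0, and ε_k > 0. Assume for each k and all z ∈ H: ⟨z, X_k z⟩ + ⟨z, Ξ₂ L_k z⟩ + ⟨L_k z, Ξ₂* z⟩ + ⟨L_k z, Z_k L_k z⟩ ≤ -ε_k ⟨z, W_k z⟩. Further assume bounded self-adjoint operators Ξ₁, Ξ₃ satisfy, for all z, ⟨z, Ξ₁ z⟩ ≤ Σ_k ⟨z, X_k z⟩ and ⟨Lz, Ξ₃ Lz⟩ ≤ Σ_k ⟨L_k z, Z_k L_k z⟩ where L := Σ_k L_k. Then there exists ε > 0 such that for all z ∈ H: ⟨z, Ξ₁ z⟩ + ⟨z, Ξ₂ Lz⟩ + ⟨Lz, Ξ₂* z⟩ + ⟨Lz, Ξ₃ Lz⟩ ≤ -ε‖z‖². -/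
import Mathlib


open scoped RealInnerProductSpace

/-- Lemma 4 (PatesReadapted): decomposed IQC certificates combine
into a global strict negativity certificate. -/
theorem stmt8 {H : Type*} [NormedAddCommGroup H] [InnerProductSpace ℝ H] [CompleteSpace H]
    (m : ℕ) (X Z L W : Fin m → H →L[ℝ] H) (Ξ₁ Ξ₂ Ξ₃ : H →L[ℝ] H)
    (ε : Fin m → ℝ) (hε : ∀ k, 0 < ε k)
    (hX : ∀ k, IsSelfAdjoint (X k)) (hZ : ∀ k, IsSelfAdjoint (Z k))
    (hL : ∀ k, IsSelfAdjoint (L k)) (hWsa : ∀ k, IsSelfAdjoint (W k))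
    (hWpsd : ∀ k z, 0 ≤ ⟪z, W k z⟫)
    (δ : ℝ) (hδ : 0 < δ) (hWcoer : ∀ z, δ * ‖z‖ ^ 2 ≤ ⟪z, (∑ k, W k) z⟫)
    (hΞ₁ : IsSelfAdjoint Ξ₁) (hΞ₃ : IsSelfAdjoint Ξ₃)
    (hk : ∀ k z, ⟪z, X k z⟫ + ⟪z, Ξ₂ (L k z)⟫ +
        ⟪L k z, (ContinuousLinearMap.adjoint Ξ₂) z⟫ + ⟪L k z, Z k (L k z)⟫ ≤
        -ε k * ⟪z, W k z⟫)
    (hA : ∀ z, ⟪z, Ξ₁ z⟫ ≤ ∑ k, ⟪z, X k z⟫)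
    (hB : ∀ z, ⟪(∑ k, L k) z, Ξ₃ ((∑ k, L k) z)⟫ ≤ ∑ k, ⟪L k z, Z k (L k z)⟫) :
    ∃ ε' > 0, ∀ z, ⟪z, Ξ₁ z⟫ + ⟪z, Ξ₂ ((∑ k, L k) z)⟫ +
      ⟪(∑ k, L k) z, (ContinuousLinearMap.adjoint Ξ₂) z⟫ +
      ⟪(∑ k, L k) z, Ξ₃ ((∑ k, L k) z)⟫ ≤ -ε' * ‖z‖ ^ 2 := by
  rcases Nat.eq_zero_or_pos m with hm | hm
  · subst hm
    refine ⟨δ, hδ, fun z => ?_⟩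
    have h := hWcoer z
    have hA' := hA z
    simp only [Finset.univ_eq_empty, Finset.sum_empty, ContinuousLinearMap.zero_apply,
      inner_zero_left, inner_zero_right, map_zero, add_zero] at h hA' ⊢
    nlinarith [sq_nonneg ‖z‖]
  · haveI : Nonempty (Fin m) := Fin.pos_iff_nonempty.mp hm
    have hne : (Finset.univ : Finset (Fin m)).Nonempty := Finset.univ_nonempty
    set c : ℝ := Finset.univ.inf' hne ε with hc
    have hcpos : 0 < c := by
      rw [hc, Finset.lt_inf'_iff]
      exact fun k _ => hε k
    refine ⟨c * δ, mul_pos hcpos hδ, fun z => ?_⟩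
    have hsum : (∑ k, ⟪z, X k z⟫) + ⟪z, Ξ₂ ((∑ k, L k) z)⟫ +
        ⟪(∑ k, L k) z, (ContinuousLinearMap.adjoint Ξ₂) z⟫ +
        (∑ k, ⟪L k z, Z k (L k z)⟫) ≤ ∑ k, -ε k * ⟪z, W k z⟫ := by
      have := Finset.sum_le_sum (fun k (_ : k ∈ Finset.univ) => hk k z)
      have e1 : ⟪z, Ξ₂ ((∑ k, L k) z)⟫ = ∑ k, ⟪z, Ξ₂ (L k z)⟫ := by
        simp [ContinuousLinearMap.sum_apply, map_sum, inner_sum]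
      have e2 : ⟪(∑ k, L k) z, (ContinuousLinearMap.adjoint Ξ₂) z⟫ =
          ∑ k, ⟪L k z, (ContinuousLinearMap.adjoint Ξ₂) z⟫ := by
        simp [ContinuousLinearMap.sum_apply, sum_inner]
      rw [e1, e2]
      calc (∑ k, ⟪z, X k z⟫) + (∑ k, ⟪z, Ξ₂ (L k z)⟫) +
          (∑ k, ⟪L k z, (ContinuousLinearMap.adjoint Ξ₂) z⟫) +
          (∑ k, ⟪L k z, Z k (L k z)⟫)
          = ∑ k, (⟪z, X k z⟫ + ⟪z, Ξ₂ (L k z)⟫ +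
            ⟪L k z, (ContinuousLinearMap.adjoint Ξ₂) z⟫ + ⟪L k z, Z k (L k z)⟫) := by
            simp [Finset.sum_add_distrib]
        _ ≤ ∑ k, -ε k * ⟪z, W k z⟫ := this
    have h2 : (∑ k, -ε k * ⟪z, W k z⟫) ≤ c * -⟪z, (∑ k, W k) z⟫ := by
      have hW : ⟪z, (∑ k, W k) z⟫ = ∑ k, ⟪z, W k z⟫ := by
        simp [ContinuousLinearMap.sum_apply, inner_sum]
      have he : c * -⟪z, (∑ k, W k) z⟫ = ∑ k, -(c * ⟪z, W k z⟫) := by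
        rw [hW]; simp [Finset.mul_sum]
      rw [he]
      refine Finset.sum_le_sum fun k _ => ?_
      have hck : c ≤ ε k := Finset.inf'_le _ (Finset.mem_univ k)
      nlinarith [hWpsd k z]
    have h3 : c * -⟪z, (∑ k, W k) z⟫ ≤ -(c * δ) * ‖z‖ ^ 2 := by
      have := hWcoer z
      nlinarith
    have := hA z
    have := hB z
    linarith
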